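/- Let M ∈ ℝ^{n×n} be an irreducible singular M-matrix (i.e., M = ρ(B)I − B for some irreducible nonnegative matrix B). If y ∈ ℝ^n satisfies M y ≥ 0 entrywise and 𝟙ᵀ y = 1, then M y = 0 and y > 0 entrywise. Moreover, there exists a unique y ∈ ℝ_{>0}^n with M y = 0 and 𝟙ᵀ y = 1. -/

import Mathlib

open scoped BigOperators

/-- Spectral radius of a real square matrix. -/
noncomputable def specRad {n : ℕ} (A : Matrix (Fin n) (Fin n) ℝ) : ℝ :=
  sSup {r : ℝ | ∃ μ : ℂ, μ ∈ spectrum ℂ (A.map (algebraMap ℝ ℂ)) ∧ r = ‖μ‖}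

/-- A matrix is irreducible if for every nonempty proper subset `S` of indices there
is an edge from `S` to its complement. -/
def MatIrred {n : ℕ} (A : Matrix (Fin n) (Fin n) ℝ) : Prop :=
  ∀ S : Set (Fin n), S.Nonempty → S ≠ Set.univ → ∃ i ∈ S, ∃ j ∉ S, A i j ≠ 0

/-!
A Perron–Frobenius argument. By irreducibility `(1 + B) ^ (n - 1)` maps every nonzero nonnegative
vector to a positive one, so the Collatz–Wielandt function `v ↦ minᵢ (B v)ᵢ / vᵢ` is continuous on
the image of the standard simplex and attains its maximum `r` at some `w > 0`; maximality forces
`B w = r w`. Comparing `|v|` with `w` shows `|μ| ≤ r` for every eigenvalue `μ`, so `r = ρ(B)`.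
The same for `Bᵀ` gives a positive left eigenvector `z`, and `zᵀ (M y) = 0` forces `M y = 0`
whenever `M y ≥ 0`. Finally, if `B y = r y` and `t = minᵢ yᵢ / wᵢ`, then `y - t w` is a
nonnegative eigenvector with a zero entry, hence zero by irreducibility.
-/

open Matrix Finset

variable {n : ℕ}

lemma exists_pos_of_nonneg_of_ne_zero {ι : Type*} {x : ι → ℝ} (hx : 0 ≤ x) (hx₀ : x ≠ 0) :
    ∃ j, 0 < x j :=
  (Pi.lt_def.mp (hx.lt_of_ne' hx₀)).2

lemma eq_zero_of_dotProduct_eq_zero {ι : Type*} [Fintype ι] {z u : ι → ℝ} (hz : ∀ i, 0 < z i)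
    (hu : 0 ≤ u) (h : z ⬝ᵥ u = 0) : u = 0 := by
  have := (sum_eq_zero_iff_of_nonneg fun i _ => mul_nonneg (hz i).le (hu i)).mp h
  funext i
  exact (mul_eq_zero.mp (this i (mem_univ i))).resolve_left (hz i).ne'

lemma Matrix.mem_spectrum_iff_exists_mulVec_eq_smul {K ι : Type*} [Field K] [Fintype ι]
    [DecidableEq ι] {A : Matrix ι ι K} {μ : K} :
    μ ∈ spectrum K A ↔ ∃ v ≠ 0, A *ᵥ v = μ • v := by
  rw [← spectrum_toLin', ← Module.End.hasEigenvalue_iff_mem_spectrum]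
  constructor
  · intro h
    obtain ⟨v, hv⟩ := h.exists_hasEigenvector
    exact ⟨v, hv.2, by simpa using Module.End.mem_eigenspace_iff.mp hv.1⟩
  · rintro ⟨v, hv, hAv⟩
    exact Module.End.hasEigenvalue_of_hasEigenvector
      ⟨Module.End.mem_eigenspace_iff.mpr (by simpa using hAv), hv⟩

lemma inv_sum_smul_mem_stdSimplex {ι : Type*} [Fintype ι] {v : ι → ℝ} (hv : 0 ≤ v)
    (hsum : ∑ i, v i ≠ 0) : (∑ i, v i)⁻¹ • v ∈ stdSimplex ℝ ι :=
  ⟨fun i => mul_nonneg (inv_nonneg.2 (sum_nonneg fun j _ => hv j)) (hv i),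
    by simp [← mul_sum, inv_mul_cancel₀ hsum]⟩

section Nonneg

variable {B : Matrix (Fin n) (Fin n) ℝ} (hB : ∀ i j, 0 ≤ B i j)
include hB

lemma mulVec_nonneg {x : Fin n → ℝ} (hx : 0 ≤ x) : 0 ≤ B *ᵥ x :=
  fun i => show 0 ≤ ∑ j, B i j * x j from sum_nonneg fun j _ => mul_nonneg (hB i j) (hx j)

lemma mul_le_mulVec {x : Fin n → ℝ} (hx : 0 ≤ x) (i j : Fin n) : B i j * x j ≤ (B *ᵥ x) i :=
  single_le_sum (f := fun k => B i k * x k) (fun k _ => mul_nonneg (hB i k) (hx k)) (mem_univ j)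

lemma one_add_mulVec_pos {x : Fin n → ℝ} (hx : 0 ≤ x) {i : Fin n} (hi : 0 < x i) :
    0 < ((1 + B) *ᵥ x) i := by
  rw [add_mulVec, one_mulVec]
  exact add_pos_of_pos_of_nonneg hi (mulVec_nonneg hB hx i)

lemma pow_one_add_mulVec_nonneg {x : Fin n → ℝ} (hx : 0 ≤ x) (k : ℕ) : 0 ≤ (1 + B) ^ k *ᵥ x := by
  induction k with
  | zero => simpa using hx
  | succ k ih =>
    rw [pow_succ', ← mulVec_mulVec, add_mulVec, one_mulVec]
    exact add_nonneg ih (mulVec_nonneg hB ih)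

end Nonneg

lemma MatIrred.transpose {B : Matrix (Fin n) (Fin n) ℝ} (hirr : MatIrred B) : MatIrred Bᵀ := by
  intro S hS hSu
  obtain ⟨i, hi, j, hj, hij⟩ := hirr Sᶜ (Set.nonempty_compl.mpr hSu)
    (fun h => (h ▸ Set.mem_univ _ : hS.some ∈ Sᶜ) hS.some_mem)
  exact ⟨j, not_not.mp hj, i, hi, hij⟩

section Irreducible

variable {B : Matrix (Fin n) (Fin n) ℝ} (hB : ∀ i j, 0 ≤ B i j) (hirr : MatIrred B)
include hB hirr

lemma MatIrred.exists_zero_lt_mulVec_of_eq_zero {x : Fin n → ℝ} (hx : 0 ≤ x) {i₀ j₀ : Fin n}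
    (hi₀ : x i₀ = 0) (hj₀ : 0 < x j₀) : ∃ i, x i = 0 ∧ 0 < (B *ᵥ x) i := by
  obtain ⟨i, hi, j, hj, hBij⟩ := hirr {i | x i = 0} ⟨i₀, hi₀⟩
    fun h => hj₀.ne' (h ▸ Set.mem_univ j₀ : j₀ ∈ {i | x i = 0})
  have hxj : 0 < x j := (hx j).lt_of_ne' hj
  exact ⟨i, hi, (mul_pos ((hB i j).lt_of_ne' hBij) hxj).trans_le (mul_le_mulVec hB hx i j)⟩

lemma MatIrred.pos_of_mulVec_le_smul {x : Fin n → ℝ} (hx : 0 ≤ x) (hx₀ : x ≠ 0) {r : ℝ}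
    (hBx : B *ᵥ x ≤ r • x) (i : Fin n) : 0 < x i := by
  by_contra! hi
  obtain ⟨j, hj⟩ := exists_pos_of_nonneg_of_ne_zero hx hx₀
  obtain ⟨k, hk, hBk⟩ := hirr.exists_zero_lt_mulVec_of_eq_zero hB hx (hi.antisymm (hx i)) hj
  have := hBx k
  simp only [Pi.smul_apply, smul_eq_mul, hk, mul_zero] at this
  linarith

lemma MatIrred.card_pos_lt_card_pos_one_add_mulVec {x : Fin n → ℝ} (hx : 0 ≤ x) (hx₀ : x ≠ 0)
    {i₀ : Fin n} (hi₀ : x i₀ = 0) : #{i | 0 < x i} < #{i | 0 < ((1 + B) *ᵥ x) i} := by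
  obtain ⟨j, hj⟩ := exists_pos_of_nonneg_of_ne_zero hx hx₀
  obtain ⟨i, hi, hBi⟩ := hirr.exists_zero_lt_mulVec_of_eq_zero hB hx hi₀ hj
  have hi' : 0 < ((1 + B) *ᵥ x) i := by
    rwa [add_mulVec, one_mulVec, Pi.add_apply, hi, zero_add]
  refine card_lt_card (ssubset_iff.mpr ⟨i, by simp [hi], insert_subset (by simpa using hi') ?_⟩)
  intro k hk
  simp only [mem_filter, mem_univ, true_and] at hk ⊢
  exact one_add_mulVec_pos hB hx hk

lemma MatIrred.pow_mulVec_pos {x : Fin n → ℝ} (hx : 0 ≤ x) (hx₀ : x ≠ 0) (i : Fin n) :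
    0 < ((1 + B) ^ (n - 1) *ᵥ x) i := by
  have key : ∀ k, (∀ i, 0 < ((1 + B) ^ k *ᵥ x) i) ∨ k + 1 ≤ #{i | 0 < ((1 + B) ^ k *ᵥ x) i} := by
    intro k
    induction k with
    | zero =>
      obtain ⟨j, hj⟩ := exists_pos_of_nonneg_of_ne_zero hx hx₀
      exact .inr (card_pos.mpr ⟨j, by simpa using hj⟩)
    | succ k ih =>
      have hy := pow_one_add_mulVec_nonneg hB hx k
      rw [pow_succ', ← mulVec_mulVec]
      by_cases hzero : ∃ i₀, ((1 + B) ^ k *ᵥ x) i₀ = 0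
      · obtain ⟨i₀, hi₀⟩ := hzero
        obtain ih | ih := ih
        · exact absurd hi₀ (ih i₀).ne'
        have hy₀ : (1 + B) ^ k *ᵥ x ≠ 0 := fun h => by simp [h] at ih
        have := hirr.card_pos_lt_card_pos_one_add_mulVec hB hy hy₀ hi₀
        exact .inr (by omega)
      · push Not at hzero
        exact .inl fun i => one_add_mulVec_pos hB hy ((hy i).lt_of_ne' (hzero i))
  rcases key (n - 1) with h | h
  · exact h i
  · rw [Nat.sub_add_cancel i.pos] at h
    have hfull : _ = univ :=
      eq_univ_of_card _ ((card_le_univ _).antisymm (by rwa [Fintype.card_fin]))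
    simpa using eq_univ_iff_forall.mp hfull i

end Irreducible

section CollatzWielandt

variable [NeZero n]

noncomputable def collatzWielandt (B : Matrix (Fin n) (Fin n) ℝ) (v : Fin n → ℝ) : ℝ :=
  univ.inf' univ_nonempty fun i => (B *ᵥ v) i / v i

variable {B : Matrix (Fin n) (Fin n) ℝ} {v : Fin n → ℝ}

lemma le_collatzWielandt_iff (hv : ∀ i, 0 < v i) {s : ℝ} :
    s ≤ collatzWielandt B v ↔ s • v ≤ B *ᵥ v := by
  simp [collatzWielandt, le_div_iff₀ (hv _), Pi.le_def]

lemma lt_collatzWielandt_iff (hv : ∀ i, 0 < v i) {s : ℝ} :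
    s < collatzWielandt B v ↔ ∀ i, s * v i < (B *ᵥ v) i := by
  simp [collatzWielandt, lt_div_iff₀ (hv _)]

lemma collatzWielandt_smul {c : ℝ} (hc : c ≠ 0) :
    collatzWielandt B (c • v) = collatzWielandt B v := by
  simp [collatzWielandt, mulVec_smul, mul_div_mul_left _ _ hc]

lemma continuousOn_collatzWielandt : ContinuousOn (collatzWielandt B) {v | ∀ i, v i ≠ 0} := by
  refine ContinuousOn.finset_inf'_apply _ fun i _ => ContinuousOn.div ?_ ?_ fun v hv => hv i
  · exact ((continuous_apply i).comp (continuous_const.matrix_mulVec continuous_id)).continuousOn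
  · exact (continuous_apply i).continuousOn

end CollatzWielandt

section Perron

variable [NeZero n] {B : Matrix (Fin n) (Fin n) ℝ} (hB : ∀ i j, 0 ≤ B i j) (hirr : MatIrred B)
include hB hirr

theorem MatIrred.exists_pos_mulVec_eq_smul :
    ∃ w : Fin n → ℝ, (∀ i, 0 < w i) ∧ ∃ r : ℝ, B *ᵥ w = r • w := by
  set P := (1 + B) ^ (n - 1)
  have hP : ∀ x : Fin n → ℝ, 0 ≤ x → x ≠ 0 → ∀ i, 0 < (P *ᵥ x) i :=
    fun x hx hx₀ => hirr.pow_mulVec_pos hB hx hx₀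
  have hPΔ : ∀ x ∈ stdSimplex ℝ (Fin n), ∀ i, 0 < (P *ᵥ x) i :=
    fun x hx => hP x hx.1 (by rintro rfl; simpa using hx.2)
  obtain ⟨x₀, hx₀, hmax⟩ := (isCompact_stdSimplex ℝ (Fin n)).exists_isMaxOn
    ⟨_, single_mem_stdSimplex ℝ 0⟩ (continuousOn_collatzWielandt.comp
      (continuous_const.matrix_mulVec continuous_id).continuousOn
      fun x hx i => (hPΔ x hx i).ne')
  set w := P *ᵥ x₀
  have hw : ∀ i, 0 < w i := hPΔ x₀ hx₀
  have hw₀ : w ≠ 0 := fun h => (hw 0).ne' (congrFun h 0)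
  set r := collatzWielandt B w
  refine ⟨w, hw, r, ?_⟩
  -- Otherwise `P` turns the nonzero defect `B w - r w ≥ 0` into a positive vector, so that
  -- `P w` beats the maximum `r`.
  by_contra hne
  have hle : r • w ≤ B *ᵥ w := (le_collatzWielandt_iff hw).mp le_rfl
  have hPB : P * B = B * P := (((Commute.one_left B).add_left (Commute.refl B)).pow_left _).eq
  have hlt : r < collatzWielandt B (P *ᵥ w) := by
    rw [lt_collatzWielandt_iff (hP w (fun i => (hw i).le) hw₀)]
    intro i
    have := hP (B *ᵥ w - r • w) (sub_nonneg.2 hle) (sub_ne_zero.2 hne) i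
    rwa [mulVec_sub, mulVec_mulVec, hPB, ← mulVec_mulVec, mulVec_smul, Pi.sub_apply, sub_pos]
      at this
  have hge : collatzWielandt B (P *ᵥ w) ≤ r := by
    have hsum : ∑ i, w i ≠ 0 := (sum_pos (fun i _ => hw i) univ_nonempty).ne'
    have : collatzWielandt B (P *ᵥ ((∑ i, w i)⁻¹ • w)) ≤ r :=
      hmax (inv_sum_smul_mem_stdSimplex (fun i => (hw i).le) hsum)
    rwa [mulVec_smul, collatzWielandt_smul (inv_ne_zero hsum)] at this
  linarith

theorem MatIrred.exists_pos_eigenvectors : ∃ (w z : Fin n → ℝ) (r : ℝ),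
    (∀ i, 0 < w i) ∧ (∀ i, 0 < z i) ∧ B *ᵥ w = r • w ∧ z ᵥ* B = r • z := by
  obtain ⟨w, hw, r, hBw⟩ := hirr.exists_pos_mulVec_eq_smul hB
  obtain ⟨z, hz, s, hzB⟩ := MatIrred.exists_pos_mulVec_eq_smul (B := Bᵀ)
    (fun i j => hB j i) hirr.transpose
  rw [mulVec_transpose] at hzB
  have hzw : 0 < z ⬝ᵥ w := sum_pos (fun i _ => mul_pos (hz i) (hw i)) univ_nonempty
  have hsr : s * (z ⬝ᵥ w) = r * (z ⬝ᵥ w) := by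
    rw [← smul_eq_mul, ← smul_dotProduct, ← hzB, ← dotProduct_mulVec, hBw, dotProduct_smul,
      smul_eq_mul]
  exact ⟨w, z, r, hw, hz, hBw, by rw [hzB, mul_right_cancel₀ hzw.ne' hsr]⟩

theorem MatIrred.eq_smul_of_mulVec_eq_smul {w : Fin n → ℝ} (hw : ∀ i, 0 < w i) {r : ℝ}
    (hBw : B *ᵥ w = r • w) {y : Fin n → ℝ} (hBy : B *ᵥ y = r • y) : ∃ t : ℝ, y = t • w := by
  obtain ⟨i₀, -, hi₀⟩ := exists_min_image univ (fun i => y i / w i) univ_nonempty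
  refine ⟨y i₀ / w i₀, ?_⟩
  set z := y - (y i₀ / w i₀) • w
  have hz : 0 ≤ z := fun i => by
    simpa [z] using (le_div_iff₀ (hw i)).mp (hi₀ i (mem_univ i))
  have hzi₀ : z i₀ = 0 := by simp [z, div_mul_cancel₀ _ (hw i₀).ne']
  have hBz : B *ᵥ z = r • z := by
    simp only [z, mulVec_sub, mulVec_smul, hBw, hBy, smul_sub, smul_comm r]
  by_contra hne
  exact (hirr.pos_of_mulVec_le_smul hB hz (sub_ne_zero.2 hne) hBz.le i₀).ne' hzi₀

end Perron

section SpectralRadius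

variable [NeZero n] {B : Matrix (Fin n) (Fin n) ℝ} {w : Fin n → ℝ} (hw : ∀ i, 0 < w i) {r : ℝ}
  (hBw : B *ᵥ w = r • w)
include hw hBw

lemma ofReal_mem_spectrum_of_mulVec_eq_smul : (r : ℂ) ∈ spectrum ℂ (B.map (algebraMap ℝ ℂ)) := by
  refine mem_spectrum_iff_exists_mulVec_eq_smul.mpr
    ⟨algebraMap ℝ ℂ ∘ w, fun h => (hw 0).ne' (by simpa using congrFun h 0), ?_⟩
  ext i
  rw [← RingHom.map_mulVec, hBw]
  simp

lemma norm_le_of_mem_spectrum (hB : ∀ i j, 0 ≤ B i j) {μ : ℂ}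
    (hμ : μ ∈ spectrum ℂ (B.map (algebraMap ℝ ℂ))) : ‖μ‖ ≤ r := by
  obtain ⟨v, hv, hBv⟩ := mem_spectrum_iff_exists_mulVec_eq_smul.mp hμ
  obtain ⟨i, -, hi⟩ := exists_max_image univ (fun j => ‖v j‖ / w j) univ_nonempty
  set c := ‖v i‖ / w i
  have hvi : 0 < ‖v i‖ := by
    obtain ⟨j, hj⟩ := Function.ne_iff.mp hv
    have := (div_pos (norm_pos_iff.2 hj) (hw j)).trans_le (hi j (mem_univ j))
    exact (div_pos_iff_of_pos_right (hw i)).mp this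
  have hbound : ∀ j, ‖v j‖ ≤ c * w j := fun j => (div_le_iff₀ (hw j)).mp (hi j (mem_univ j))
  have : ‖μ‖ * ‖v i‖ ≤ r * ‖v i‖ := calc
    ‖μ‖ * ‖v i‖ = ‖∑ j, (B i j : ℂ) * v j‖ := by
      rw [← norm_mul, ← smul_eq_mul, ← Pi.smul_apply μ v i, ← hBv]
      rfl
    _ ≤ ∑ j, B i j * ‖v j‖ :=
      (norm_sum_le _ _).trans_eq (by simp [abs_of_nonneg (hB i _)])
    _ ≤ ∑ j, B i j * (c * w j) :=
      sum_le_sum fun j _ => mul_le_mul_of_nonneg_left (hbound j) (hB i j)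
    _ = c * (B *ᵥ w) i := by
      simp only [mulVec, dotProduct, mul_sum]
      exact sum_congr rfl fun j _ => by ring
    _ = r * ‖v i‖ := by
      have := (hw i).ne'
      simp only [c, hBw, Pi.smul_apply, smul_eq_mul]
      field_simp
  exact le_of_mul_le_mul_right this hvi

theorem specRad_eq_of_mulVec_eq_smul (hB : ∀ i j, 0 ≤ B i j) : specRad B = r := by
  have hr := ofReal_mem_spectrum_of_mulVec_eq_smul hw hBw
  have hr₀ : 0 ≤ r := (norm_nonneg _).trans (norm_le_of_mem_spectrum hw hBw hB hr)
  refine IsGreatest.csSup_eq ⟨⟨r, hr, by simp [abs_of_nonneg hr₀]⟩, ?_⟩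
  rintro _ ⟨μ, hμ, rfl⟩
  exact norm_le_of_mem_spectrum hw hBw hB hμ

end SpectralRadius

/-- For an irreducible singular M-matrix `M = ρ(B)I − B` (`B ≥ 0` irreducible):
if `M y ≥ 0` and `𝟙ᵀy = 1` then `M y = 0` and `y > 0`; moreover there is a unique
positive `y` with `M y = 0` and `𝟙ᵀ y = 1`. -/
theorem irred_singular_M_matrix_kernel
    {n : ℕ} (hn : 0 < n)
    (B : Matrix (Fin n) (Fin n) ℝ) (hB : ∀ i j, 0 ≤ B i j) (hirr : MatIrred B)
    (M : Matrix (Fin n) (Fin n) ℝ)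
    (hM : M = specRad B • (1 : Matrix (Fin n) (Fin n) ℝ) - B) :
    (∀ y : Fin n → ℝ, (∀ i, 0 ≤ M.mulVec y i) → ∑ i, y i = 1 →
        M.mulVec y = 0 ∧ ∀ i, 0 < y i) ∧
      (∃! y : Fin n → ℝ, (∀ i, 0 < y i) ∧ M.mulVec y = 0 ∧ ∑ i, y i = 1) := by
  have : NeZero n := ⟨hn.ne'⟩
  obtain ⟨w, z, r, hw, hz, hBw, hzB⟩ := hirr.exists_pos_eigenvectors hB
  rw [specRad_eq_of_mulVec_eq_smul hw hBw hB] at hM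
  have hker : ∀ y, M *ᵥ y = 0 ↔ B *ᵥ y = r • y := fun y => by
    rw [hM, sub_mulVec, smul_mulVec, one_mulVec, sub_eq_zero, eq_comm]
  have hzM : z ᵥ* M = 0 := by rw [hM, vecMul_sub, vecMul_smul, vecMul_one, hzB, sub_self]
  have hsum : 0 < ∑ i, w i := sum_pos (fun i _ => hw i) univ_nonempty
  set y₀ := (∑ i, w i)⁻¹ • w
  have hy₀ : ∀ i, 0 < y₀ i := fun i => mul_pos (inv_pos.2 hsum) (hw i)
  have hunique : ∀ y, M *ᵥ y = 0 → ∑ i, y i = 1 → y = y₀ := by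
    intro y hy hy₁
    obtain ⟨t, rfl⟩ := hirr.eq_smul_of_mulVec_eq_smul hB hw hBw ((hker y).mp hy)
    rw [eq_inv_of_mul_eq_one_left (a := t) (by simpa [← mul_sum] using hy₁)]
  refine ⟨fun y hy hy₁ => ?_, ⟨y₀, ⟨hy₀, ?_, ?_⟩, fun y hy => hunique y hy.2.1 hy.2.2⟩⟩
  · have hMy : M *ᵥ y = 0 :=
      eq_zero_of_dotProduct_eq_zero hz hy (by rw [dotProduct_mulVec, hzM, zero_dotProduct])
    exact ⟨hMy, hunique y hMy hy₁ ▸ hy₀⟩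
  · rw [hker, mulVec_smul, hBw, smul_comm]
  · exact (inv_sum_smul_mem_stdSimplex (fun i => (hw i).le) hsum.ne').2
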